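/- arXiv:2005.03114 — 2 statements merged into one kernel-verified Lean document; each statement's English description precedes it below -/
import Mathlib

section
/- Let n ≥ 2 and m₁, …, mₙ > 0. Let κ ∈ ℝ, α ∈ ℝ, and let u ∈ ℂⁿ be nonzero with pairwise distinct components. If ∇L(u; κ) + α·𝒥u = 0, where 𝒥u = (i·u₁, …, i·uₙ), then α = 0 and ∇L(u; κ) = 0; that is, every zero of the augmented map with nonzero u is a genuine relative equilibrium of the n-body problem in the space of constant curvature κ. -/
open scoped BigOperators

/-- Unified curved pair potential `V(z, w; κ)`. -/
noncomputable def Vpot (z w : ℂ) (κ : ℝ) : ℝ :=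
  (4 * κ * (z * (starRingEnd ℂ) w).re +
      (κ * ‖w‖ ^ 2 - 1) * (κ * ‖z‖ ^ 2 - 1)) /
    (2 * ‖z - w‖ *
      Real.sqrt (κ ^ 2 * ‖z‖ ^ 2 * ‖w‖ ^ 2 +
        2 * κ * (z * (starRingEnd ℂ) w).re + 1))


/-- Conformal factor `λ(z; κ)`. -/
noncomputable def lamConf (z : ℂ) (κ : ℝ) : ℝ := 4 / (1 + κ * ‖z‖ ^ 2) ^ 2

/-- Reduced Lagrangian of the curved `n`-body problem in rotating coordinates. -/
noncomputable def Lag (n : ℕ) (m : Fin n → ℝ) (κ : ℝ) (u : Fin n → ℂ) : ℝ :=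
  (1 / 2) * ∑ j, m j * lamConf (u j) κ * ‖u j‖ ^ 2 +
    ∑ j : Fin n, ∑ k ∈ Finset.Ioi j, m j * m k * Vpot (u j) (u k) κ

/-- Gradient of the reduced Lagrangian with respect to the real inner product
`Re⟪v, w⟫ = ∑ j, Re (v j * conj (w j))` on `ℂⁿ ≅ ℝ^{2n}`: the `j`-th component
is `∂L/∂xⱼ + i ∂L/∂yⱼ`. -/
noncomputable def gradL (n : ℕ) (m : Fin n → ℝ) (κ : ℝ) (u : Fin n → ℂ) : Fin n → ℂ :=
  fun j =>
    ((fderiv ℝ (fun z : ℂ => Lag n m κ (Function.update u j z)) (u j)) 1 : ℝ) +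
      ((fderiv ℝ (fun z : ℂ => Lag n m κ (Function.update u j z)) (u j)) Complex.I : ℝ) *
        Complex.I

/-!
`L` is invariant under the rotations `u ↦ e^{iθ} u`, so wherever `L` is differentiable its
gradient is orthogonal to `𝒥u`; pairing `∇L(u) = -α 𝒥u` with `𝒥u` then gives `α ‖u‖² = 0`.
Writing `V(z, w) = (|1 + κ z w̄|² - κ |z - w|²) / (2 |z - w| |1 + κ z w̄|)` shows that `L` is
differentiable at every collision-free `u` off the singular set `1 + κ |uⱼ|² = 0` or
`1 + κ uⱼ ū_k = 0`. On the singular set one term of `L` blows up in some coordinate `uⱼ ≠ 0`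
while the others stay smooth, so `z ↦ L(u[j ↦ z])` is not differentiable at `uⱼ`, the `j`-th
component of `gradL` is the junk value `0`, and the equation at `j` forces `α uⱼ = 0`.
-/

open Complex ComplexConjugate Filter Topology Finset Function

section ComplexGrad

variable {ι : Type*} [DecidableEq ι]

noncomputable def complexGrad (f : (ι → ℂ) → ℝ) (u : ι → ℂ) (j : ι) : ℂ :=
  (fderiv ℝ (fun z : ℂ => f (update u j z)) (u j) 1 : ℂ) +
    (fderiv ℝ (fun z : ℂ => f (update u j z)) (u j) I : ℂ) * I

theorem ContinuousLinearMap.apply_eq_re_mul_conj (ℓ : ℂ →L[ℝ] ℝ) (w : ℂ) :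
    ℓ w = (((ℓ 1 : ℂ) + ℓ I * I) * conj w).re := by
  have hw : w = w.re • (1 : ℂ) + w.im • I := by simp [re_add_im]
  rw [hw, map_add, map_smul, map_smul]
  simp only [smul_eq_mul, mul_one, real_smul, map_add, map_mul, conj_ofReal, conj_I, mul_re,
    add_re, add_im, ofReal_re, ofReal_im, I_re, I_im, mul_im, neg_re, neg_im]
  ring

theorem complexGrad_eq_zero_of_not_differentiableAt {f : (ι → ℂ) → ℝ} {u : ι → ℂ} {j : ι}
    (h : ¬DifferentiableAt ℝ (fun z : ℂ => f (update u j z)) (u j)) : complexGrad f u j = 0 := by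
  simp [complexGrad, fderiv_zero_of_not_differentiableAt h]

theorem HasFDerivAt.fderiv_update_apply [Fintype ι] {f : (ι → ℂ) → ℝ} {D : (ι → ℂ) →L[ℝ] ℝ}
    {u : ι → ℂ} (hf : HasFDerivAt f D u) (j : ι) (w : ℂ) :
    fderiv ℝ (fun z : ℂ => f (update u j z)) (u j) w = D (Pi.single j w) := by
  rw [← update_eq_self j u] at hf
  have hslice : HasFDerivAt (fun z : ℂ => f (update u j z)) _ (u j) :=
    hf.comp (u j) (hasFDerivAt_update u (u j))
  rw [hslice.fderiv, ContinuousLinearMap.comp_apply]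
  congr 1
  ext i
  rcases eq_or_ne i j with rfl | hi <;> simp [*]

theorem HasFDerivAt.apply_eq_sum_re_complexGrad_mul_conj [Fintype ι] {f : (ι → ℂ) → ℝ}
    {D : (ι → ℂ) →L[ℝ] ℝ} {u : ι → ℂ} (hf : HasFDerivAt f D u) (v : ι → ℂ) :
    D v = ∑ j, (complexGrad f u j * conj (v j)).re := by
  conv_lhs => rw [← univ_sum_single v]
  rw [map_sum]
  refine sum_congr rfl fun j _ => ?_
  rw [← hf.fderiv_update_apply, ContinuousLinearMap.apply_eq_re_mul_conj]
  rfl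

end ComplexGrad

theorem HasFDerivAt.apply_I_smul_eq_zero {ι : Type*} [Fintype ι] {f : (ι → ℂ) → ℝ}
    {D : (ι → ℂ) →L[ℝ] ℝ} {u : ι → ℂ} (hf : HasFDerivAt f D u)
    (hinv : ∀ θ : ℝ, f (cexp ((θ : ℂ) * I) • u) = f u) : D (I • u) = 0 := by
  have hrot : HasDerivAt (fun θ : ℝ => cexp ((θ : ℂ) * I) • u) (I • u) 0 := by
    have : HasDerivAt (fun θ : ℝ => cexp ((θ : ℂ) * I)) I 0 := by
      simpa using ((hasDerivAt_id (0 : ℝ)).ofReal_comp.mul_const I).cexp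
    simpa using this.smul_const u
  have hf' : HasFDerivAt f D (cexp (((0 : ℝ) : ℂ) * I) • u) := by simpa using hf
  have := hf'.comp_hasDerivAt (0 : ℝ) hrot
  rw [show f ∘ (fun θ : ℝ => cexp ((θ : ℂ) * I) • u) = fun _ => f u from funext hinv] at this
  exact this.unique (hasDerivAt_const _ _)

section Potential

theorem Vpot_eq (z w : ℂ) (κ : ℝ) :
    Vpot z w κ = (‖(κ : ℂ) * (z * conj w) + 1‖ ^ 2 - κ * ‖z - w‖ ^ 2) /
      (2 * ‖z - w‖ * ‖(κ : ℂ) * (z * conj w) + 1‖) := by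
  have hsq : ‖(κ : ℂ) * (z * conj w) + 1‖ ^ 2 =
      κ ^ 2 * ‖z‖ ^ 2 * ‖w‖ ^ 2 + 2 * κ * (z * conj w).re + 1 := by
    simp only [Complex.sq_norm, normSq_apply, mul_re, mul_im, add_re, add_im, ofReal_re,
      ofReal_im, conj_re, conj_im, one_re, one_im]
    ring
  have hsub : ‖z - w‖ ^ 2 = ‖z‖ ^ 2 + ‖w‖ ^ 2 - 2 * (z * conj w).re := by
    simp only [Complex.sq_norm, normSq_apply, mul_re, sub_re, sub_im, conj_re, conj_im]
    ring
  rw [Vpot]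
  congr 1
  · rw [hsq, hsub]
    ring
  · rw [← hsq, Real.sqrt_sq (norm_nonneg _)]

theorem Vpot_mul_mul {e : ℂ} (he : ‖e‖ = 1) (z w : ℂ) (κ : ℝ) :
    Vpot (e * z) (e * w) κ = Vpot z w κ := by
  have hconj : e * z * conj (e * w) = z * conj w := by
    rw [map_mul, mul_mul_mul_comm, mul_conj, ← Complex.sq_norm, he]
    simp
  simp only [Vpot, hconj, ← mul_sub, norm_mul, he, one_mul]

variable {E : Type*} [NormedAddCommGroup E] [NormedSpace ℝ E] {f g : E → ℂ} {x : E}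

theorem DifferentiableAt.Vpot (hf : DifferentiableAt ℝ f x) (hg : DifferentiableAt ℝ g x)
    {κ : ℝ} (hne : f x ≠ g x) (hreg : (κ : ℂ) * (f x * conj (g x)) + 1 ≠ 0) :
    DifferentiableAt ℝ (fun y => Vpot (f y) (g y) κ) x := by
  simp only [Vpot_eq]
  have hA : DifferentiableAt ℝ (fun y => (κ : ℂ) * (f y * conj (g y)) + 1) x := by fun_prop
  have hB : DifferentiableAt ℝ (fun y => f y - g y) x := hf.sub hg
  have hAn := hA.norm ℝ hreg
  have hBn := hB.norm ℝ (sub_ne_zero.2 hne)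
  have hA2 := hA.norm_sq ℝ
  have hB2 := hB.norm_sq ℝ
  have hden : 2 * ‖f x - g x‖ * ‖(κ : ℂ) * (f x * conj (g x)) + 1‖ ≠ 0 :=
    mul_ne_zero (mul_ne_zero two_ne_zero (norm_ne_zero_iff.2 (sub_ne_zero.2 hne)))
      (norm_ne_zero_iff.2 hreg)
  simp only [div_eq_mul_inv]
  fun_prop (disch := exact hden)

theorem DifferentiableAt.lamConf (hf : DifferentiableAt ℝ f x) {κ : ℝ}
    (hreg : 1 + κ * ‖f x‖ ^ 2 ≠ 0) : DifferentiableAt ℝ (fun y => lamConf (f y) κ) x := by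
  have hf2 := hf.norm_sq ℝ
  have hden : (1 + κ * ‖f x‖ ^ 2) ^ 2 ≠ 0 := pow_ne_zero 2 hreg
  simp only [_root_.lamConf, div_eq_mul_inv]
  fun_prop (disch := exact hden)

end Potential

theorem not_continuousAt_of_tendsto_abs_atTop {X α : Type*} [TopologicalSpace X] {F B : X → ℝ}
    {x : X} {l : Filter α} [l.NeBot] {γ : α → X} (hrest : ContinuousAt (fun z => F z - B z) x)
    (hγ : Tendsto γ l (𝓝 x)) (hB : Tendsto (fun t => |B (γ t)|) l atTop) : ¬ContinuousAt F x := by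
  intro hF
  have hBc : ContinuousAt B x := by
    convert hF.sub hrest using 1
    funext z
    simp
  exact not_tendsto_nhds_of_tendsto_atTop hB _ (hBc.tendsto.comp hγ).abs

section Singular

variable {κ : ℝ} {z w : ℂ}

theorem ofReal_mul_mul_conj_add_one_eq_zero_comm :
    (κ : ℂ) * (z * conj w) + 1 = 0 ↔ (κ : ℂ) * (w * conj z) + 1 = 0 := by
  have key : ∀ z w : ℂ, (κ : ℂ) * (z * conj w) + 1 = 0 → (κ : ℂ) * (w * conj z) + 1 = 0 :=
    fun z w h => by simpa [mul_comm] using congrArg conj h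
  exact ⟨key z w, key w z⟩

theorem eq_of_ofReal_mul_mul_conj_add_one_eq_zero {w' : ℂ} (h : (κ : ℂ) * (z * conj w) + 1 = 0)
    (h' : (κ : ℂ) * (z * conj w') + 1 = 0) : w = w' := by
  have hκz : (κ : ℂ) * z ≠ 0 := by
    rintro h0
    rw [← mul_assoc, h0] at h
    simp at h
  have : (κ : ℂ) * z * (conj w - conj w') = 0 := by linear_combination h - h'
  exact (starRingEnd ℂ).injective (sub_eq_zero.1 ((mul_eq_zero.1 this).resolve_left hκz))

theorem ofReal_mul_mul_conj_self_add_one (κ : ℝ) (z : ℂ) :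
    (κ : ℂ) * (z * conj z) + 1 = ((1 + κ * ‖z‖ ^ 2 : ℝ) : ℂ) := by
  rw [mul_conj, ← Complex.sq_norm]
  push_cast
  ring

theorem tendsto_abs_Vpot_add_atTop (hzw : z ≠ w) (hsing : (κ : ℂ) * (z * conj w) + 1 = 0) :
    Tendsto (fun t : ℝ => |Vpot (z + t) w κ|) (𝓝[>] 0) atTop := by
  have hκ : κ ≠ 0 := by
    rintro rfl
    simp at hsing
  have hw : w ≠ 0 := by
    rintro rfl
    simp at hsing
  -- `1 + κ z w̄` vanishes to first order at `z`, while the numerator of `Vpot` tends to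
  -- `-κ ‖z - w‖² ≠ 0`.
  have hA : ∀ t : ℝ, (κ : ℂ) * ((z + t) * conj w) + 1 = (κ * conj w) * t := fun t => by
    linear_combination hsing
  set c := ‖(κ : ℂ) * conj w‖
  have hc : 0 < c := norm_pos_iff.2 (mul_ne_zero (ofReal_ne_zero.2 hκ) ((map_ne_zero _).2 hw))
  set P : ℝ → ℝ := fun t => (c ^ 2 * t ^ 2 - κ * ‖z + t - w‖ ^ 2) / (2 * ‖z + t - w‖ * c)
  have hzw' : 0 < ‖z - w‖ := norm_pos_iff.2 (sub_ne_zero.2 hzw)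
  have hP : ContinuousAt P 0 := by
    have : 2 * ‖z + ((0 : ℝ) : ℂ) - w‖ * c ≠ 0 := by rw [ofReal_zero, add_zero]; positivity
    fun_prop (disch := exact this)
  have hP0 : 0 < |P 0| := by
    simp [P, hκ, sub_eq_zero, hzw, hc.ne']
  have heq : ∀ t ∈ Set.Ioi (0 : ℝ), |P t| * t⁻¹ = |Vpot (z + t) w κ| := by
    intro t ht
    have ht : (0 : ℝ) < t := ht
    rw [Vpot_eq, hA, norm_mul, norm_real, Real.norm_of_nonneg ht.le, mul_pow, ← mul_assoc,
      div_mul_eq_div_div, div_eq_mul_inv _ t, abs_mul, abs_inv, abs_of_pos ht]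
  exact (((hP.tendsto.abs).mono_left nhdsWithin_le_nhds).pos_mul_atTop hP0
    tendsto_inv_nhdsGT_zero).congr' (eventually_nhdsWithin_of_forall heq)

theorem tendsto_lamConf_mul_norm_sq_atTop (hsing : 1 + κ * ‖z‖ ^ 2 = 0) :
    Tendsto (fun t : ℝ => lamConf ((1 - t) • z) κ * ‖(1 - t) • z‖ ^ 2) (𝓝[>] 0) atTop := by
  have hz : z ≠ 0 := by
    rintro rfl
    simp at hsing
  set b := ‖z‖ ^ 2
  have hb : 0 < b := by positivity
  set P : ℝ → ℝ := fun t => 4 * (1 - t) ^ 2 * b / (2 - t) ^ 2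
  have hP : ContinuousAt P 0 := by
    have : (2 - (0 : ℝ)) ^ 2 ≠ 0 := by norm_num
    fun_prop (disch := exact this)
  have hP0 : 0 < P 0 := by
    norm_num [P]
    exact hb
  have heq : ∀ t : ℝ, P t * t⁻¹ ^ 2 = lamConf ((1 - t) • z) κ * ‖(1 - t) • z‖ ^ 2 := by
    intro t
    have hnorm : ‖(1 - t) • z‖ ^ 2 = (1 - t) ^ 2 * b := by
      rw [norm_smul, mul_pow, Real.norm_eq_abs, sq_abs]
    have hden : 1 + κ * ((1 - t) ^ 2 * b) = t * (2 - t) := by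
      linear_combination (1 - t) ^ 2 * hsing
    rw [lamConf, hnorm, hden]
    simp only [P, div_eq_mul_inv, mul_pow, mul_inv, inv_pow]
    ring
  exact ((hP.tendsto.mono_left nhdsWithin_le_nhds).pos_mul_atTop hP0
    ((tendsto_pow_atTop two_ne_zero).comp tendsto_inv_nhdsGT_zero)).congr heq

end Singular

section Lagrangian

variable {n : ℕ} {m : Fin n → ℝ} {κ : ℝ} {u : Fin n → ℂ}

/-- For `κ < 0` the first condition keeps each `uⱼ` off the circle at infinity of the disk
model; for `κ > 0` the second says that no two bodies sit at antipodal points of the sphere. -/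
def IsRegularConfig (κ : ℝ) (u : Fin n → ℂ) : Prop :=
  (∀ j, 1 + κ * ‖u j‖ ^ 2 ≠ 0) ∧ ∀ j k, j ≠ k → (κ : ℂ) * (u j * conj (u k)) + 1 ≠ 0

theorem gradL_eq_complexGrad : gradL n m κ u = complexGrad (Lag n m κ) u := rfl

theorem Lag_smul {e : ℂ} (he : ‖e‖ = 1) : Lag n m κ (e • u) = Lag n m κ u := by
  simp only [Lag, Pi.smul_apply, smul_eq_mul, Vpot_mul_mul he, lamConf, norm_mul, he, one_mul]

noncomputable def partialLag (m : Fin n → ℝ) (κ : ℝ) (S : Finset (Fin n))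
    (P : Finset ((_ : Fin n) × Fin n)) (v : Fin n → ℂ) : ℝ :=
  1 / 2 * ∑ a ∈ S, m a * lamConf (v a) κ * ‖v a‖ ^ 2 +
    ∑ x ∈ P, m x.1 * m x.2 * Vpot (v x.1) (v x.2) κ

theorem Lag_eq_partialLag (v : Fin n → ℂ) :
    Lag n m κ v = partialLag m κ univ (univ.sigma Ioi) v := by
  rw [Lag, partialLag, sum_sigma']

theorem differentiableAt_Lag (hu : Injective u) (hreg : IsRegularConfig κ u) :
    DifferentiableAt ℝ (Lag n m κ) u := by
  have hev : ∀ a, DifferentiableAt ℝ (fun v : Fin n → ℂ => v a) u :=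
    fun a => differentiableAt_apply a u
  refine ((differentiableAt_const _).mul (DifferentiableAt.fun_sum fun a _ => ?_)).add
    (DifferentiableAt.fun_sum fun a _ => DifferentiableAt.fun_sum fun b hb => ?_)
  · exact ((differentiableAt_const _).mul ((hev a).lamConf (hreg.1 a))).mul ((hev a).norm_sq ℝ)
  · have hab : a ≠ b := (mem_Ioi.1 hb).ne
    exact (differentiableAt_const _).mul ((hev a).Vpot (hev b) (hu.ne hab) (hreg.2 a b hab))

theorem differentiableAt_update_apply (j a : Fin n) (w : ℂ) :
    DifferentiableAt ℝ (fun z : ℂ => update u j z a) w :=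
  (differentiableAt_apply (𝕜 := ℝ) a (update u j w)).comp w
    (hasFDerivAt_update (𝕜 := ℝ) u (i := j) w).differentiableAt

theorem differentiableAt_update_lamConf_mul_norm_sq {j a : Fin n}
    (hreg : j = a → 1 + κ * ‖u a‖ ^ 2 ≠ 0) :
    DifferentiableAt ℝ (fun z => lamConf (update u j z a) κ * ‖update u j z a‖ ^ 2) (u j) := by
  by_cases hja : j = a
  · subst hja
    simp only [update_self]
    exact (differentiableAt_fun_id.lamConf (hreg rfl)).mul (differentiableAt_fun_id.norm_sq ℝ)
  · simp only [update_of_ne (Ne.symm hja)]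
    exact differentiableAt_const _

theorem differentiableAt_update_Vpot {j a b : Fin n} (hab : u a ≠ u b)
    (hreg : j = a ∨ j = b → (κ : ℂ) * (u a * conj (u b)) + 1 ≠ 0) :
    DifferentiableAt ℝ (fun z => Vpot (update u j z a) (update u j z b) κ) (u j) := by
  by_cases hj : j = a ∨ j = b
  · exact (differentiableAt_update_apply j a _).Vpot (differentiableAt_update_apply j b _)
      (by simpa using hab) (by simpa using hreg hj)
  · obtain ⟨hja, hjb⟩ := not_or.1 hj
    simp only [update_of_ne (Ne.symm hja), update_of_ne (Ne.symm hjb)]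
    exact differentiableAt_const _

theorem differentiableAt_partialLag_update (hu : Injective u) {j : Fin n} {S : Finset (Fin n)}
    {P : Finset ((_ : Fin n) × Fin n)} (hS : j ∈ S → 1 + κ * ‖u j‖ ^ 2 ≠ 0)
    (hP : ∀ x ∈ P, x.1 ≠ x.2 ∧ (j = x.1 ∨ j = x.2 → (κ : ℂ) * (u x.1 * conj (u x.2)) + 1 ≠ 0)) :
    DifferentiableAt ℝ (fun z => partialLag m κ S P (update u j z)) (u j) := by
  refine DifferentiableAt.add (DifferentiableAt.const_mul
    (DifferentiableAt.fun_sum fun a ha => ?_) _) (DifferentiableAt.fun_sum fun x hx => ?_)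
  · simp only [mul_assoc]
    exact (differentiableAt_update_lamConf_mul_norm_sq (j := j) (a := a)
      (by rintro rfl; exact hS ha)).const_mul _
  · exact (differentiableAt_update_Vpot (hu.ne (hP x hx).1) (hP x hx).2).const_mul _

theorem not_differentiableAt_update_Lag_of_lamConf_singular {j : Fin n} (hm : m j ≠ 0)
    (hu : Injective u) (hsing : 1 + κ * ‖u j‖ ^ 2 = 0) :
    ¬DifferentiableAt ℝ (fun z => Lag n m κ (update u j z)) (u j) := by
  have hpair : ∀ k ≠ j, (κ : ℂ) * (u j * conj (u k)) + 1 ≠ 0 := fun k hk h =>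
    hk (hu (eq_of_ofReal_mul_mul_conj_add_one_eq_zero h
      (by rw [ofReal_mul_mul_conj_self_add_one, hsing, ofReal_zero])))
  have hrest : ∀ z, Lag n m κ (update u j z) - 1 / 2 * (m j * lamConf z κ * ‖z‖ ^ 2) =
      partialLag m κ (univ.erase j) (univ.sigma Ioi) (update u j z) := by
    intro z
    rw [Lag_eq_partialLag, partialLag, partialLag, ← add_sum_erase _ _ (mem_univ j), update_self]
    ring
  have hrest_diff := differentiableAt_partialLag_update (m := m) hu (j := j)
    (S := univ.erase j) (P := univ.sigma Ioi) (fun h => absurd rfl (mem_erase.1 h).1) <| by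
    rintro ⟨a, b⟩ hab
    have hab : a < b := by simpa using hab
    refine ⟨hab.ne, ?_⟩
    rintro (rfl | rfl)
    · exact hpair b hab.ne'
    · rw [Ne, ofReal_mul_mul_conj_add_one_eq_zero_comm]
      exact hpair a hab.ne
  intro hd
  refine not_continuousAt_of_tendsto_abs_atTop (l := 𝓝[>] 0)
    (B := fun z => 1 / 2 * (m j * lamConf z κ * ‖z‖ ^ 2)) (γ := fun t : ℝ => (1 - t) • u j)
    (by simpa only [hrest] using hrest_diff.continuousAt) ?_ ?_ hd.continuousAt
  · simpa using ((by fun_prop : Continuous fun t : ℝ => (1 - t) • u j).tendsto 0).mono_left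
      nhdsWithin_le_nhds
  · refine ((tendsto_abs_atTop_atTop.comp (tendsto_lamConf_mul_norm_sq_atTop hsing)).const_mul_atTop
      (by positivity : 0 < |1 / 2 * m j|)).congr fun t => ?_
    simp only [comp_apply, abs_mul]
    ring

theorem not_differentiableAt_update_Lag_of_Vpot_singular {j k : Fin n} (hm : m j * m k ≠ 0)
    (hu : Injective u) (hjk : j < k) (hsing : (κ : ℂ) * (u j * conj (u k)) + 1 = 0) :
    ¬DifferentiableAt ℝ (fun z => Lag n m κ (update u j z)) (u j) := by
  have hjk_mem : (⟨j, k⟩ : (_ : Fin n) × Fin n) ∈ univ.sigma Ioi := by simpa using hjk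
  have hrest : ∀ z, Lag n m κ (update u j z) - m j * m k * Vpot z (u k) κ =
      partialLag m κ univ ((univ.sigma Ioi).erase ⟨j, k⟩) (update u j z) := by
    intro z
    rw [Lag_eq_partialLag, partialLag, partialLag, ← add_sum_erase _ _ hjk_mem]
    simp only [update_self, update_of_ne hjk.ne']
    ring
  have hrest_diff := differentiableAt_partialLag_update (m := m) hu (j := j) (S := univ)
    (P := (univ.sigma Ioi).erase ⟨j, k⟩) (fun _ h => hjk.ne (hu
      (eq_of_ofReal_mul_mul_conj_add_one_eq_zero
        (by rw [ofReal_mul_mul_conj_self_add_one, h, ofReal_zero]) hsing))) <| by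
    rintro ⟨a, b⟩ hab
    simp only [mem_erase, ne_eq, mem_sigma, mem_univ, mem_Ioi, true_and, Sigma.mk.injEq,
      heq_eq_eq, not_and] at hab
    obtain ⟨hne, hab⟩ := hab
    refine ⟨hab.ne, ?_⟩
    rintro (rfl | rfl) h
    · exact hne rfl (hu (eq_of_ofReal_mul_mul_conj_add_one_eq_zero h hsing))
    · rw [ofReal_mul_mul_conj_add_one_eq_zero_comm] at h
      exact (hab.trans hjk).ne (hu (eq_of_ofReal_mul_mul_conj_add_one_eq_zero h hsing))
  intro hd
  refine not_continuousAt_of_tendsto_abs_atTop (l := 𝓝[>] 0)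
    (B := fun z => m j * m k * Vpot z (u k) κ) (γ := fun t : ℝ => u j + t)
    (by simpa only [hrest] using hrest_diff.continuousAt) ?_ ?_ hd.continuousAt
  · simpa using ((by fun_prop : Continuous fun t : ℝ => u j + t).tendsto 0).mono_left
      nhdsWithin_le_nhds
  · refine ((tendsto_abs_Vpot_add_atTop (hu.ne hjk.ne) hsing).const_mul_atTop
      (by positivity : 0 < |m j * m k|)).congr fun t => ?_
    simp only [abs_mul]

theorem sum_re_gradL_mul_conj_I_mul_eq_zero (hu : Injective u) (hreg : IsRegularConfig κ u) :
    ∑ j, (gradL n m κ u j * conj (I * u j)).re = 0 := by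
  have hD := (differentiableAt_Lag (m := m) hu hreg).hasFDerivAt
  rw [gradL_eq_complexGrad, ← hD.apply_I_smul_eq_zero fun θ => Lag_smul (norm_exp_ofReal_mul_I θ),
    hD.apply_eq_sum_re_complexGrad_mul_conj]
  rfl

theorem exists_not_differentiableAt_update_Lag (hm : ∀ j, m j ≠ 0) (hu : Injective u)
    (hreg : ¬IsRegularConfig κ u) :
    ∃ j, u j ≠ 0 ∧ ¬DifferentiableAt ℝ (fun z => Lag n m κ (update u j z)) (u j) := by
  simp only [IsRegularConfig, not_and_or, not_forall, not_not] at hreg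
  rcases hreg with ⟨j, hj⟩ | ⟨j, k, hjk, hsing⟩
  · refine ⟨j, ?_, not_differentiableAt_update_Lag_of_lamConf_singular (hm j) hu hj⟩
    rintro h
    simp [h] at hj
  · rcases hjk.lt_or_gt with hjk | hkj
    · refine ⟨j, ?_, not_differentiableAt_update_Lag_of_Vpot_singular
        (mul_ne_zero (hm j) (hm k)) hu hjk hsing⟩
      rintro h
      simp [h] at hsing
    · rw [ofReal_mul_mul_conj_add_one_eq_zero_comm] at hsing
      refine ⟨k, ?_, not_differentiableAt_update_Lag_of_Vpot_singular
        (mul_ne_zero (hm k) (hm j)) hu hkj hsing⟩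
      rintro h
      simp [h] at hsing

end Lagrangian

theorem augmented_map_zero_is_relative_equilibrium_general
    (n : ℕ) (m : Fin n → ℝ) (hm : ∀ j, 0 < m j)
    (κ α : ℝ) (u : Fin n → ℂ) (hu0 : u ≠ 0) (hu : Function.Injective u)
    (h : ∀ j, gradL n m κ u j + (α : ℂ) * (Complex.I * u j) = 0) :
    α = 0 ∧ gradL n m κ u = 0 := by
  have hα : α = 0 := by
    by_cases hreg : IsRegularConfig κ u
    · have hsum := sum_re_gradL_mul_conj_I_mul_eq_zero (m := m) hu hreg
      have hterm : ∀ j, (gradL n m κ u j * conj (I * u j)).re = -(α * ‖u j‖ ^ 2) := by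
        intro j
        rw [eq_neg_of_add_eq_zero_left (h j), neg_mul, mul_assoc, mul_conj, ← Complex.sq_norm,
          norm_mul, norm_I, one_mul]
        simp only [← ofReal_mul, ← ofReal_neg, ofReal_re]
      obtain ⟨j, hj⟩ := Function.ne_iff.1 hu0
      have hpos : 0 < ∑ j, ‖u j‖ ^ 2 :=
        sum_pos' (fun _ _ => by positivity) ⟨j, mem_univ j, pow_pos (norm_pos_iff.2 hj) 2⟩
      simp only [hterm, sum_neg_distrib, ← mul_sum, neg_eq_zero] at hsum
      exact (mul_eq_zero.1 hsum).resolve_right hpos.ne'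
    · obtain ⟨j, hj0, hnd⟩ :=
        exists_not_differentiableAt_update_Lag (fun j => (hm j).ne') hu hreg
      have hj := h j
      rw [gradL_eq_complexGrad, complexGrad_eq_zero_of_not_differentiableAt hnd] at hj
      simpa [hj0, I_ne_zero] using hj
  exact ⟨hα, funext fun j => by simpa [hα] using h j⟩

/-- Every zero of the augmented map with nonzero configuration is a genuine
relative equilibrium: the Lagrange multiplier vanishes. -/
theorem augmented_map_zero_is_relative_equilibrium
    (n : ℕ) (hn : 2 ≤ n) (m : Fin n → ℝ) (hm : ∀ j, 0 < m j)
    (κ α : ℝ) (u : Fin n → ℂ) (hu0 : u ≠ 0) (hu : Function.Injective u)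
    (h : ∀ j, gradL n m κ u j + (α : ℂ) * (Complex.I * u j) = 0) :
    α = 0 ∧ gradL n m κ u = 0 :=
  augmented_map_zero_is_relative_equilibrium_general n m hm κ α u hu0 hu h
end

section
/- Let n ≥ 2, take n equal masses m₁ = ⋯ = mₙ = 1, let s₁ = (1/4) Σ_{j=1}^{n−1} 1/sin(jπ/n), and set r = (1/2) s₁^{1/3}. Then the regular polygon configuration aⱼ = r·e^{2πij/n}, j = 0, …, n−1, is a central configuration: for every j, 4 aⱼ = (1/2) Σ_{k ≠ j} (aⱼ − a_k)/|aⱼ − a_k|³. -/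
/-!
Write `ζ = exp (2πi/n)`, so that `a k = r ζ^k`. Factoring out `a j` from `a j - a k` and
shifting `k ↦ k - j` turns the `j`-th sum into `a j / r³` times the constant
`F = ∑_{k ≠ 0} (1 - ζ^k) / |1 - ζ^k|³`. Pairing `k` with `-k` replaces `ζ^k` by its conjugate,
and for `|u| = 1` one has `(1 - u) + (1 - ū) = |1 - u|²`, so
`2F = ∑_{k ≠ 0} 1 / |1 - ζ^k| = ∑_{k=1}^{n-1} 1 / (2 sin (kπ/n))`, i.e. `F = s₁`.
The equation `4 a j = a j s₁ / (2 r³)` is then just `8 r³ = s₁`.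
-/

open Complex ComplexConjugate Finset

lemma pow_val_add_of_pow_eq_one {M : Type*} [Monoid M] {ζ : M} {n : ℕ} (hζ : ζ ^ n = 1)
    (a b : Fin n) : ζ ^ ((a + b : Fin n) : ℕ) = ζ ^ (a : ℕ) * ζ ^ (b : ℕ) := by
  rw [Fin.val_add, ← pow_eq_pow_mod _ hζ, pow_add]

lemma norm_pow_of_pow_eq_one {ζ : ℂ} {n : ℕ} [NeZero n] (hζ : ζ ^ n = 1) (m : ℕ) :
    ‖ζ ^ m‖ = 1 := by
  rw [norm_pow, norm_eq_one_of_pow_eq_one hζ (NeZero.ne n), one_pow]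

lemma pow_val_neg_of_pow_eq_one {ζ : ℂ} {n : ℕ} [NeZero n] (hζ : ζ ^ n = 1) (k : Fin n) :
    ζ ^ ((-k : Fin n) : ℕ) = conj (ζ ^ (k : ℕ)) := by
  rw [← inv_eq_conj (norm_pow_of_pow_eq_one hζ _)]
  apply eq_inv_of_mul_eq_one_left
  rw [← pow_val_add_of_pow_eq_one hζ, neg_add_cancel, Fin.val_zero, pow_zero]

lemma sum_erase_zero_val_eq_sum_Ico {M : Type*} [AddCommGroup M] {n : ℕ} [NeZero n]
    (f : ℕ → M) : ∑ k ∈ univ.erase (0 : Fin n), f k = ∑ m ∈ Ico 1 n, f m := by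
  rw [sum_erase_eq_sub (mem_univ 0), Fin.sum_univ_eq_sum_range (fun m => f m),
    sum_range_eq_add_Ico f (Nat.pos_of_neZero n), Fin.val_zero, add_sub_cancel_left]

noncomputable def inverseSquare (z : ℂ) : ℂ := z / (‖z‖ : ℂ) ^ 3

lemma inverseSquare_mul (c z : ℂ) :
    inverseSquare (c * z) = inverseSquare c * inverseSquare z := by
  simp only [inverseSquare, norm_mul, ofReal_mul, mul_pow, mul_div_mul_comm]

lemma inverseSquare_add_inverseSquare_conj (z : ℂ) :
    inverseSquare z + inverseSquare (conj z) = 2 * z.re / (‖z‖ : ℂ) ^ 3 := by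
  rw [inverseSquare, inverseSquare, norm_conj, ← add_div, add_conj]
  push_cast; ring

lemma two_mul_re_one_sub_of_norm_eq_one {u : ℂ} (hu : ‖u‖ = 1) :
    2 * (1 - u).re = ‖1 - u‖ ^ 2 := by
  have hsq : u.re * u.re + u.im * u.im = 1 := by
    rw [← normSq_apply, ← Complex.sq_norm, hu, one_pow]
  rw [Complex.sq_norm, normSq_apply]
  simp only [sub_re, one_re, sub_im, one_im]
  linear_combination -hsq

lemma inverseSquare_one_sub_add_inverseSquare_one_sub_conj {u : ℂ} (hu : ‖u‖ = 1) :
    inverseSquare (1 - u) + inverseSquare (1 - conj u) = ((‖1 - u‖⁻¹ : ℝ) : ℂ) := by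
  have hconj : 1 - conj u = conj (1 - u) := by rw [map_sub, map_one]
  rw [hconj, inverseSquare_add_inverseSquare_conj, ← ofReal_ofNat, ← ofReal_mul,
    two_mul_re_one_sub_of_norm_eq_one hu]
  rcases eq_or_ne ‖1 - u‖ 0 with h | h
  · simp [h]
  · push_cast
    field_simp

lemma sum_erase_inverseSquare_sub_pow {ζ : ℂ} {n : ℕ} [NeZero n] (hζ : ζ ^ n = 1) (c : ℂ)
    (j : Fin n) :
    ∑ k ∈ univ.erase j, inverseSquare (c * ζ ^ (j : ℕ) - c * ζ ^ (k : ℕ)) =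
      inverseSquare (c * ζ ^ (j : ℕ)) *
        ∑ k ∈ univ.erase (0 : Fin n), inverseSquare (1 - ζ ^ (k : ℕ)) := by
  have hsplit (k : Fin n) :
      c * ζ ^ (j : ℕ) - c * ζ ^ (k : ℕ) = c * ζ ^ (j : ℕ) * (1 - ζ ^ ((k - j : Fin n) : ℕ)) := by
    conv_lhs => rw [← sub_add_cancel k j, pow_val_add_of_pow_eq_one hζ]
    ring
  rw [mul_sum]
  refine sum_equiv (Equiv.subRight j) (fun k => by simp [sub_eq_zero]) fun k _ => ?_
  rw [hsplit, inverseSquare_mul, Equiv.subRight_apply]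

lemma two_mul_sum_erase_zero_inverseSquare_one_sub_pow {ζ : ℂ} {n : ℕ} [NeZero n]
    (hζ : ζ ^ n = 1) :
    2 * ∑ k ∈ univ.erase (0 : Fin n), inverseSquare (1 - ζ ^ (k : ℕ)) =
      ∑ k ∈ univ.erase (0 : Fin n), ((‖1 - ζ ^ (k : ℕ)‖⁻¹ : ℝ) : ℂ) := by
  have hneg : ∑ k ∈ univ.erase (0 : Fin n), inverseSquare (1 - conj (ζ ^ (k : ℕ))) =
      ∑ k ∈ univ.erase (0 : Fin n), inverseSquare (1 - ζ ^ (k : ℕ)) :=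
    sum_equiv (Equiv.neg _) (fun k => by simp) fun k _ => by
      rw [Equiv.neg_apply, pow_val_neg_of_pow_eq_one hζ]
  rw [two_mul]
  nth_rewrite 2 [← hneg]
  rw [← sum_add_distrib]
  exact sum_congr rfl fun k _ => inverseSquare_one_sub_add_inverseSquare_one_sub_conj
    (norm_pow_of_pow_eq_one hζ _)

lemma sin_mul_pi_div_nonneg {m n : ℕ} (hm : m ≤ n) : 0 ≤ Real.sin (m * Real.pi / n) := by
  apply Real.sin_nonneg_of_nonneg_of_le_pi (by positivity)
  apply div_le_of_le_mul₀ (by positivity) Real.pi_pos.le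
  rw [mul_comm Real.pi]
  exact mul_le_mul_of_nonneg_right (by exact_mod_cast hm) Real.pi_pos.le

lemma norm_one_sub_exp_pow {m n : ℕ} (hm : m ≤ n) :
    ‖1 - exp (2 * Real.pi * I / n) ^ m‖ = 2 * Real.sin (m * Real.pi / n) := by
  rw [← exp_nat_mul, norm_sub_rev,
    show (m : ℂ) * (2 * Real.pi * I / n) = I * ((2 * Real.pi * m / n : ℝ) : ℂ) by push_cast; ring,
    norm_exp_I_mul_ofReal_sub_one, show 2 * Real.pi * m / n / 2 = m * Real.pi / n by ring,
    Real.norm_of_nonneg (mul_nonneg zero_le_two (sin_mul_pi_div_nonneg hm))]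

lemma sum_erase_zero_inverseSquare_one_sub_exp_pow (n : ℕ) [NeZero n] :
    ∑ k ∈ univ.erase (0 : Fin n), inverseSquare (1 - exp (2 * Real.pi * I / n) ^ (k : ℕ)) =
      ((1 / 4 * ∑ m ∈ Ico 1 n, 1 / Real.sin (m * Real.pi / n) : ℝ) : ℂ) := by
  have h := two_mul_sum_erase_zero_inverseSquare_one_sub_pow
    (isPrimitiveRoot_exp n (NeZero.ne n)).pow_eq_one
  simp only [fun k : Fin n => norm_one_sub_exp_pow k.isLt.le] at h
  rw [sum_erase_zero_val_eq_sum_Ico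
    (fun m => (((2 * Real.sin (m * Real.pi / n))⁻¹ : ℝ) : ℂ))] at h
  push_cast at h ⊢
  rw [← mul_right_inj' (two_ne_zero' ℂ), h, mul_sum, mul_sum]
  exact sum_congr rfl fun m _ => by ring

lemma eight_mul_half_rpow_one_third_pow_three {s : ℝ} (hs : 0 ≤ s) :
    8 * (1 / 2 * s ^ ((1 : ℝ) / 3)) ^ 3 = s := by
  have h := Real.rpow_inv_natCast_pow hs three_ne_zero
  push_cast at h
  rw [mul_pow, one_div (3 : ℝ), h]
  ring

theorem polygon_is_central_configuration_general
    (n : ℕ)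
    (s₁ : ℝ) (hs₁ : s₁ = (1 / 4) * ∑ j ∈ Finset.Ico 1 n, 1 / Real.sin (j * Real.pi / n))
    (r : ℝ) (hr : r = (1 / 2) * s₁ ^ ((1 : ℝ) / 3))
    (a : Fin n → ℂ)
    (ha : ∀ j : Fin n, a j = (r : ℂ) * Complex.exp (2 * Real.pi * Complex.I * (j : ℕ) / n)) :
    ∀ j : Fin n,
      4 * a j = (1 / 2) *
        ∑ k ∈ Finset.univ.erase j, (a j - a k) / (‖a j - a k‖ : ℂ) ^ 3 := by
  intro j
  have : NeZero n := ⟨j.pos.ne'⟩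
  set ζ := exp (2 * Real.pi * I / n)
  have hζ : ζ ^ n = 1 := (isPrimitiveRoot_exp n (NeZero.ne n)).pow_eq_one
  have ha' (k : Fin n) : a k = r * ζ ^ (k : ℕ) := by
    rw [ha, ← exp_nat_mul]
    ring_nf
  have hs₁_nonneg : 0 ≤ s₁ := hs₁ ▸ mul_nonneg (by norm_num) (sum_nonneg fun m hm =>
    one_div_nonneg.mpr (sin_mul_pi_div_nonneg (mem_Ico.mp hm).2.le))
  have hr_cube : 8 * r ^ 3 = s₁ := hr ▸ eight_mul_half_rpow_one_third_pow_three hs₁_nonneg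
  have hr_nonneg : 0 ≤ r := hr ▸ by positivity
  have hforce : ∑ k ∈ univ.erase j, (a j - a k) / (‖a j - a k‖ : ℂ) ^ 3 =
      inverseSquare (a j) * s₁ := by
    simp only [ha']
    rw [hs₁, ← sum_erase_zero_inverseSquare_one_sub_exp_pow]
    exact sum_erase_inverseSquare_sub_pow hζ _ j
  rw [hforce, ha' j, inverseSquare, norm_mul, norm_real, Real.norm_of_nonneg hr_nonneg,
    norm_pow_of_pow_eq_one hζ, mul_one, ← hr_cube]
  rcases eq_or_ne r 0 with hr0 | hr0
  · simp [hr0]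
  · push_cast
    field_simp
    ring

/-- The regular polygon of `n` equal unit masses with radius
`r = (1/2) s₁^{1/3}` is a central configuration. -/
theorem polygon_is_central_configuration
    (n : ℕ) (hn : 2 ≤ n)
    (s₁ : ℝ) (hs₁ : s₁ = (1 / 4) * ∑ j ∈ Finset.Ico 1 n, 1 / Real.sin (j * Real.pi / n))
    (r : ℝ) (hr : r = (1 / 2) * s₁ ^ ((1 : ℝ) / 3))
    (a : Fin n → ℂ)
    (ha : ∀ j : Fin n, a j = (r : ℂ) * Complex.exp (2 * Real.pi * Complex.I * (j : ℕ) / n)) :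
    ∀ j : Fin n,
      4 * a j = (1 / 2) *
        ∑ k ∈ Finset.univ.erase j, (a j - a k) / (‖a j - a k‖ : ℂ) ^ 3 :=
  polygon_is_central_configuration_general n s₁ hs₁ r hr a ha
end
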